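/- arXiv:2004.08871 — 2 statements merged into one kernel-verified Lean document; each statement's English description precedes it below -/
import Mathlib

section
/- Let (a_{αβ}) be a symmetric positive definite 2×2 matrix with inverse (a^{αβ}), and let λ ≥ 0, μ > 0. Define c^{αβστ} = (2λμ/(λ + 2μ)) a^{αβ} a^{στ} + μ(a^{ασ} a^{βτ} + a^{ατ} a^{βσ}). Then there exist constants c, C > 0 such that c|M|² ≤ c^{αβστ} M_{αβ} M_{στ} ≤ C|M|² for every symmetric M ∈ ℝ^{2×2}. -/
/-!
Writing `k = 2λμ/(λ+2μ) ≥ 0`, the quadratic form is `k tr(AM)² + 2μ tr(AMAM)` with `A = a⁻¹`.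
If `0 ≤ P, Q` then `tr(PMQM) = tr(P · MᴴQM) ≥ 0`, so `B ↦ tr(BMBM)` is monotone on positive
semidefinite matrices. For a positive definite `2 × 2` matrix, Cayley–Hamilton gives
`A - (det A / tr A) • 1 = A² / tr A ≥ 0` and `tr A • 1 - A = det A • A⁻¹ ≥ 0`; comparing `A` with these
multiples of the identity bounds `tr(AMAM)` between `(det A / tr A)² |M|²` and `(tr A)² |M|²`, and
Cauchy–Schwarz bounds `tr(AM)²` by `|A|² |M|²`.
-/

open scoped MatrixOrder ComplexOrder

namespace Matrix

section RCLike

variable {n 𝕜 : Type*} [Fintype n] [RCLike 𝕜]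

theorem PosSemidef.trace_mul_nonneg {P Q : Matrix n n 𝕜} (hP : P.PosSemidef)
    (hQ : Q.PosSemidef) : 0 ≤ (P * Q).trace := by
  classical
  have hS : (CFC.sqrt P)ᴴ = CFC.sqrt P := (CFC.sqrt_nonneg P).isSelfAdjoint
  rw [← CFC.sqrt_mul_sqrt_self P hP.nonneg, Matrix.mul_assoc, trace_mul_comm]
  simpa [hS] using (hQ.conjTranspose_mul_mul_same (CFC.sqrt P)).trace_nonneg

theorem trace_mul_mul_mul_nonneg {P Q M : Matrix n n 𝕜} (hP : P.PosSemidef)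
    (hQ : Q.PosSemidef) (hM : M.IsHermitian) : 0 ≤ (P * M * Q * M).trace := by
  have := hP.trace_mul_nonneg (hQ.conjTranspose_mul_mul_same M)
  rwa [hM.eq, ← Matrix.mul_assoc, ← Matrix.mul_assoc] at this

theorem trace_mul_mul_mul_le_of_le {A B M : Matrix n n 𝕜} (hB : B.PosSemidef) (hBA : B ≤ A)
    (hM : M.IsHermitian) : (B * M * B * M).trace ≤ (A * M * A * M).trace := by
  have hAB : (A - B).PosSemidef := hBA
  have hA : A.PosSemidef := by simpa using hB.add hAB
  have key : A * M * A * M - B * M * B * M = (A - B) * M * A * M + B * M * (A - B) * M := by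
    noncomm_ring
  have := add_nonneg (trace_mul_mul_mul_nonneg hAB hA hM) (trace_mul_mul_mul_nonneg hB hAB hM)
  rw [← trace_add, ← key, trace_sub] at this
  exact sub_nonneg.mp this

variable [DecidableEq n]

theorem sq_mul_trace_mul_self_le {A M : Matrix n n 𝕜} {m : 𝕜} (hm : 0 ≤ m) (hmA : m • 1 ≤ A)
    (hM : M.IsHermitian) : m ^ 2 * (M * M).trace ≤ (A * M * A * M).trace := by
  have := trace_mul_mul_mul_le_of_le (PosSemidef.one.smul hm) hmA hM
  simp only [Matrix.smul_mul, Matrix.mul_smul, Matrix.one_mul, Matrix.mul_one, smul_smul,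
    trace_smul, smul_eq_mul] at this
  rwa [sq]

theorem trace_mul_mul_mul_le_sq_mul {A M : Matrix n n 𝕜} {K : 𝕜} (hA : A.PosSemidef)
    (hAK : A ≤ K • 1) (hM : M.IsHermitian) : (A * M * A * M).trace ≤ K ^ 2 * (M * M).trace := by
  have := trace_mul_mul_mul_le_of_le hA hAK hM
  simp only [Matrix.smul_mul, Matrix.mul_smul, Matrix.one_mul, Matrix.mul_one, smul_smul,
    trace_smul, smul_eq_mul] at this
  rwa [sq]

end RCLike

section Real

variable {n : Type*} [Fintype n]

theorem trace_mul_eq_sum {A M : Matrix n n ℝ} (hM : M.IsSymm) :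
    (A * M).trace = ∑ i, ∑ j, A i j * M i j := by
  simp only [trace, diag_apply, mul_apply]
  refine Finset.sum_congr rfl fun i _ ↦ Finset.sum_congr rfl fun j _ ↦ ?_
  rw [hM.apply]

theorem trace_mul_self_eq_sum_sq {M : Matrix n n ℝ} (hM : M.IsSymm) :
    (M * M).trace = ∑ i, ∑ j, M i j ^ 2 := by
  simp only [trace_mul_eq_sum hM, sq]

theorem trace_mul_sq_le {A M : Matrix n n ℝ} (hA : A.IsSymm) (hM : M.IsSymm) :
    (A * M).trace ^ 2 ≤ (A * A).trace * (M * M).trace := by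
  rw [trace_mul_eq_sum hM, trace_mul_self_eq_sum_sq hA, trace_mul_self_eq_sum_sq hM,
    ← Fintype.sum_prod_type', ← Fintype.sum_prod_type', ← Fintype.sum_prod_type']
  exact Finset.sum_mul_sq_le_sq_mul_sq _ _ _

theorem trace_mul_sq_eq_sum {A M : Matrix n n ℝ} (hM : M.IsSymm) :
    (A * M).trace ^ 2 = ∑ α, ∑ β, ∑ σ, ∑ τ, A α β * A σ τ * M α β * M σ τ := by
  simp only [trace_mul_eq_sum hM, sq, Finset.sum_mul_sum]
  refine Finset.sum_congr rfl fun α _ ↦ ?_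
  rw [Finset.sum_comm]
  refine Finset.sum_congr rfl fun β _ ↦ Finset.sum_congr rfl fun σ _ ↦
    Finset.sum_congr rfl fun τ _ ↦ ?_
  ring

theorem trace_mul_mul_mul_eq_sum {A M : Matrix n n ℝ} (hA : A.IsSymm) (hM : M.IsSymm) :
    (A * M * A * M).trace = ∑ α, ∑ β, ∑ σ, ∑ τ, A α σ * A β τ * M α β * M σ τ := by
  simp only [trace, diag_apply, mul_apply, Finset.sum_mul]
  refine Finset.sum_congr rfl fun α _ ↦ Finset.sum_congr rfl fun β _ ↦ ?_
  rw [Finset.sum_comm]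
  refine Finset.sum_congr rfl fun σ _ ↦ Finset.sum_congr rfl fun τ _ ↦ ?_
  rw [hA.apply τ β, hM.apply β α]
  ring

theorem trace_mul_mul_mul_eq_sum' {A M : Matrix n n ℝ} (hA : A.IsSymm) (hM : M.IsSymm) :
    (A * M * A * M).trace = ∑ α, ∑ β, ∑ σ, ∑ τ, A α τ * A β σ * M α β * M σ τ := by
  rw [trace_mul_mul_mul_eq_sum hA hM]
  refine Finset.sum_congr rfl fun α _ ↦ Finset.sum_congr rfl fun β _ ↦ ?_
  rw [Finset.sum_comm]
  refine Finset.sum_congr rfl fun σ _ ↦ Finset.sum_congr rfl fun τ _ ↦ ?_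
  rw [hM.apply σ τ]

theorem sum_isotropicTensor_mul_mul (k μ : ℝ) {A M : Matrix n n ℝ} (hA : A.IsSymm)
    (hM : M.IsSymm) :
    ∑ α, ∑ β, ∑ σ, ∑ τ, (k * A α β * A σ τ + μ * (A α σ * A β τ + A α τ * A β σ)) *
        M α β * M σ τ = k * (A * M).trace ^ 2 + 2 * μ * (A * M * A * M).trace := by
  rw [two_mul, add_mul, trace_mul_sq_eq_sum hM]
  nth_rw 1 [trace_mul_mul_mul_eq_sum hA hM]
  rw [trace_mul_mul_mul_eq_sum' hA hM]
  simp only [Finset.mul_sum, ← Finset.sum_add_distrib]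
  refine Finset.sum_congr rfl fun α _ ↦ Finset.sum_congr rfl fun β _ ↦ ?_
  refine Finset.sum_congr rfl fun σ _ ↦ Finset.sum_congr rfl fun τ _ ↦ ?_
  ring

end Real

theorem mul_self_fin_two (A : Matrix (Fin 2) (Fin 2) ℝ) : A * A = A.trace • A - A.det • 1 := by
  ext i j
  fin_cases i <;> fin_cases j <;>
    simp [mul_apply, Fin.sum_univ_two, trace_fin_two, det_fin_two] <;> ring

theorem PosDef.det_div_trace_smul_one_le {A : Matrix (Fin 2) (Fin 2) ℝ} (hA : A.PosDef) :
    (A.det / A.trace) • (1 : Matrix (Fin 2) (Fin 2) ℝ) ≤ A := by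
  have h : A - (A.det / A.trace) • 1 = A.trace⁻¹ • (Aᴴ * A) := by
    rw [hA.isHermitian.eq, mul_self_fin_two, smul_sub, smul_smul,
      inv_mul_cancel₀ hA.trace_pos.ne', one_smul, smul_smul, inv_mul_eq_div]
  show (A - _).PosSemidef
  rw [h]
  exact (posSemidef_conjTranspose_mul_self A).smul (inv_nonneg.mpr hA.trace_pos.le)

theorem PosDef.le_trace_smul_one {A : Matrix (Fin 2) (Fin 2) ℝ} (hA : A.PosDef) :
    A ≤ A.trace • (1 : Matrix (Fin 2) (Fin 2) ℝ) := by
  have h : A.trace • 1 - A = A.det • A⁻¹ := by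
    rw [inv_def, smul_smul, Ring.inverse_eq_inv', mul_inv_cancel₀ hA.det_pos.ne', one_smul,
      adjugate_fin_two, trace_fin_two]
    ext i j
    fin_cases i <;> fin_cases j <;> simp
  show (_ - A).PosSemidef
  rw [h]
  exact hA.inv.posSemidef.smul hA.det_pos.le

end Matrix

open Matrix

theorem stmt_8_general
    (a : Matrix (Fin 2) (Fin 2) ℝ) (ha : a.PosDef)
    (lam mu : ℝ) (hlam : 0 ≤ lam) (hmu : 0 < mu)
    (A : Matrix (Fin 2) (Fin 2) ℝ) (hA : A = a⁻¹)
    (c4 : Fin 2 → Fin 2 → Fin 2 → Fin 2 → ℝ)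
    (hc4 : ∀ α β σ τ, c4 α β σ τ =
      (2 * lam * mu / (lam + 2 * mu)) * A α β * A σ τ +
        mu * (A α σ * A β τ + A α τ * A β σ)) :
    ∃ c C : ℝ, 0 < c ∧ 0 < C ∧
      ∀ M : Matrix (Fin 2) (Fin 2) ℝ, M.IsSymm →
        c * (∑ α, ∑ β, M α β ^ 2) ≤
            (∑ α, ∑ β, ∑ σ, ∑ τ, c4 α β σ τ * M α β * M σ τ) ∧
        (∑ α, ∑ β, ∑ σ, ∑ τ, c4 α β σ τ * M α β * M σ τ) ≤
            C * (∑ α, ∑ β, M α β ^ 2) := by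
  have hApos : A.PosDef := hA ▸ ha.inv
  have hAsymm : A.IsSymm := isHermitian_iff_isSymm.mp hApos.isHermitian
  set k := 2 * lam * mu / (lam + 2 * mu)
  have hk : 0 ≤ k := by positivity
  have hdet := hApos.det_pos
  have htr := hApos.trace_pos
  have hAA : 0 ≤ (A * A).trace := by rw [trace_mul_self_eq_sum_sq hAsymm]; positivity
  refine ⟨2 * mu * (A.det / A.trace) ^ 2, k * (A * A).trace + 2 * mu * A.trace ^ 2,
    by positivity, by positivity, fun M hM ↦ ?_⟩
  have hMh : M.IsHermitian := isHermitian_iff_isSymm.mpr hM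
  simp only [hc4, sum_isotropicTensor_mul_mul k mu hAsymm hM, ← trace_mul_self_eq_sum_sq hM]
  constructor
  · have hlow := sq_mul_trace_mul_self_le (by positivity) hApos.det_div_trace_smul_one_le hMh
    linarith [mul_le_mul_of_nonneg_left hlow (by positivity : (0 : ℝ) ≤ 2 * mu),
      mul_nonneg hk (sq_nonneg (A * M).trace)]
  · have hup := trace_mul_mul_mul_le_sq_mul hApos.posSemidef hApos.le_trace_smul_one hMh
    linarith [mul_le_mul_of_nonneg_left hup (by positivity : (0 : ℝ) ≤ 2 * mu),
      mul_le_mul_of_nonneg_left (trace_mul_sq_le hAsymm hM) hk]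

/-- Ellipticity of the reduced plane-stress elasticity tensor
`c^{αβστ} = (2λμ/(λ+2μ)) a^{αβ} a^{στ} + μ(a^{ασ}a^{βτ} + a^{ατ}a^{βσ})`
built from the inverse `(a^{αβ})` of a symmetric positive definite 2×2
matrix `(a_{αβ})`: there exist `c, C > 0` such that
`c|M|² ≤ c^{αβστ} M_{αβ} M_{στ} ≤ C|M|²` for all symmetric `M ∈ ℝ^{2×2}`. -/
theorem stmt_8
    (a : Matrix (Fin 2) (Fin 2) ℝ) (ha : a.PosDef) (hsymm : a.IsSymm)
    (lam mu : ℝ) (hlam : 0 ≤ lam) (hmu : 0 < mu)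
    (A : Matrix (Fin 2) (Fin 2) ℝ) (hA : A = a⁻¹)
    (c4 : Fin 2 → Fin 2 → Fin 2 → Fin 2 → ℝ)
    (hc4 : ∀ α β σ τ, c4 α β σ τ =
      (2 * lam * mu / (lam + 2 * mu)) * A α β * A σ τ +
        mu * (A α σ * A β τ + A α τ * A β σ)) :
    ∃ c C : ℝ, 0 < c ∧ 0 < C ∧
      ∀ M : Matrix (Fin 2) (Fin 2) ℝ, M.IsSymm →
        c * (∑ α, ∑ β, M α β ^ 2) ≤
            (∑ α, ∑ β, ∑ σ, ∑ τ, c4 α β σ τ * M α β * M σ τ) ∧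
        (∑ α, ∑ β, ∑ σ, ∑ τ, c4 α β σ τ * M α β * M σ τ) ≤
            C * (∑ α, ∑ β, M α β ^ 2) :=
  stmt_8_general a ha lam mu hlam hmu A hA c4 hc4
end

section
/- Let E ⊂ ℝⁿ be a nonempty closed convex set and for t > 0 let B_t(E) = {x : dist(x, E) ≤ t}. Let τ(x) = dist(x, E). Then for x, y outside E, setting τ̄ = min{τ(x), τ(y)}, the gradients of τ (where they exist) satisfy |∇τ(x) − ∇τ(y)| ≤ (2/τ̄)|x − y|. -/
open Metric InnerProductSpace Set

/-!
At a point `x ∉ E` where `τ` is differentiable, its gradient is the unit vector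
`(x - p) / ‖x - p‖` for a nearest point `p ∈ E`: `τ` is `1`-Lipschitz and decreases at unit
rate along the segment from `x` to `p`. For convex `E` the nearest-point map is `1`-Lipschitz,
so `‖(x - p) - (y - q)‖ ≤ 2 ‖x - y‖`, and normalizing vectors of length at least `τ̄` is
`(1 / τ̄)`-Lipschitz.
-/

lemma infDist_sub_smul_of_infDist_eq_dist {F : Type*} [NormedAddCommGroup F] [NormedSpace ℝ F]
    {E : Set F} {x p : F} (hp : p ∈ E) (hxp : infDist x E = dist x p) {t : ℝ}
    (ht₀ : 0 ≤ t) (ht₁ : t ≤ 1) :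
    infDist (x - t • (x - p)) E = (1 - t) * dist x p := by
  have hdist : dist x (x - t • (x - p)) = t * dist x p := by
    rw [dist_eq_norm, dist_eq_norm, sub_sub_cancel, norm_smul, Real.norm_of_nonneg ht₀]
  refine le_antisymm ?_ ?_
  · calc infDist (x - t • (x - p)) E ≤ dist (x - t • (x - p)) p := infDist_le_dist_of_mem hp
      _ = (1 - t) * dist x p := by
        rw [dist_eq_norm, dist_eq_norm, show x - t • (x - p) - p = (1 - t) • (x - p) by module,
          norm_smul, Real.norm_of_nonneg (by linarith)]
  · linarith [infDist_le_infDist_add_dist (s := E) (x := x) (y := x - t • (x - p))]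

variable {F : Type*} [NormedAddCommGroup F] [InnerProductSpace ℝ F]

lemma HasGradientAt.infDist_eq [CompleteSpace F] {E : Set F} {x p g : F}
    (hg : HasGradientAt (infDist · E) g x) (hp : p ∈ E) (hx : x ∉ E)
    (hxp : infDist x E = dist x p) :
    g = ‖x - p‖⁻¹ • (x - p) := by
  have hd : 0 < ‖x - p‖ := norm_pos_iff.2 (sub_ne_zero.2 (ne_of_mem_of_not_mem hp hx).symm)
  have hu : ‖‖x - p‖⁻¹ • (x - p)‖ = 1 := by
    rw [norm_smul, norm_inv, norm_norm, inv_mul_cancel₀ hd.ne']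
  have hg_le : ‖g‖ ≤ 1 := by
    simpa using hg.hasFDerivAt.le_of_lipschitz (lipschitz_infDist_pt E)
  have hline : ⟪g, x - p⟫_ℝ = ‖x - p‖ := by
    have hchain : HasDerivAt (fun t : ℝ => infDist (x - t • (x - p)) E) (-⟪g, x - p⟫_ℝ) 0 := by
      have := hg.hasFDerivAt.comp_hasDerivAt_of_eq (0 : ℝ)
        (((hasDerivAt_id (0 : ℝ)).smul_const (x - p)).const_sub x) (by simp)
      simpa [Function.comp_def, inner_sub_right] using this
    have hsegment : HasDerivWithinAt (fun t : ℝ => infDist (x - t • (x - p)) E)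
        (-‖x - p‖) (Ici 0) 0 := by
      have hlin : HasDerivAt (fun t : ℝ => (1 - t) * ‖x - p‖) (-‖x - p‖) 0 := by
        simpa using ((hasDerivAt_id (0 : ℝ)).const_sub 1).mul_const ‖x - p‖
      refine hlin.hasDerivWithinAt.congr_of_eventuallyEq ?_ ?_
      · filter_upwards [inter_mem_nhdsWithin (Ici 0) (Iio_mem_nhds one_pos)]
          with t ⟨ht₀, ht₁⟩
        rw [infDist_sub_smul_of_infDist_eq_dist hp hxp ht₀ (le_of_lt ht₁), dist_eq_norm]
      · simp [hxp, dist_eq_norm]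
    exact neg_inj.1 ((uniqueDiffWithinAt_Ici 0).eq_deriv _ hchain.hasDerivWithinAt hsegment)
  have hinner : ⟪g, ‖x - p‖⁻¹ • (x - p)⟫_ℝ = 1 := by
    rw [real_inner_smul_right, hline, inv_mul_cancel₀ hd.ne']
  have hg_norm : ‖g‖ = 1 := by
    refine le_antisymm hg_le ?_
    simpa [hinner, hu] using real_inner_le_norm g (‖x - p‖⁻¹ • (x - p))
  exact (inner_eq_one_iff_of_norm_eq_one hg_norm hu).1 hinner

lemma Convex.inner_sub_le_zero_of_infDist_eq_dist {E : Set F} (hcv : Convex ℝ E) {x p : F}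
    (hp : p ∈ E) (hxp : infDist x E = dist x p) {z : F} (hz : z ∈ E) :
    ⟪x - p, z - p⟫_ℝ ≤ 0 := by
  refine (norm_eq_iInf_iff_real_inner_le_zero hcv hp).1 ?_ z hz
  simp_rw [← dist_eq_norm, ← hxp, infDist_eq_iInf]

lemma Convex.norm_sub_le_of_infDist_eq_dist {E : Set F} (hcv : Convex ℝ E) {x y p q : F}
    (hp : p ∈ E) (hq : q ∈ E) (hxp : infDist x E = dist x p) (hyq : infDist y E = dist y q) :
    ‖p - q‖ ≤ ‖x - y‖ := by
  have hsq : ‖p - q‖ ^ 2 ≤ ⟪x - y, p - q⟫_ℝ := by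
    have hdecomp : ⟪x - y, p - q⟫_ℝ
        = ‖p - q‖ ^ 2 - ⟪x - p, q - p⟫_ℝ - ⟪y - q, p - q⟫_ℝ := by
      rw [← real_inner_self_eq_norm_sq]
      simp only [inner_sub_left, inner_sub_right, real_inner_comm]
      ring
    linarith [hcv.inner_sub_le_zero_of_infDist_eq_dist hp hxp hq,
      hcv.inner_sub_le_zero_of_infDist_eq_dist hq hyq hp]
  nlinarith [real_inner_le_norm (x - y) (p - q), norm_nonneg (p - q), norm_nonneg (x - y)]

lemma mul_norm_inv_norm_smul_sub_le {u v : F} {m : ℝ} (hm : 0 < m) (hu : m ≤ ‖u‖)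
    (hv : m ≤ ‖v‖) :
    m * ‖‖u‖⁻¹ • u - ‖v‖⁻¹ • v‖ ≤ ‖u - v‖ := by
  have ha : 0 < ‖u‖ := hm.trans_le hu
  have hb : 0 < ‖v‖ := hm.trans_le hv
  have hidentity : ‖u‖ * ‖v‖ * ‖‖u‖⁻¹ • u - ‖v‖⁻¹ • v‖ ^ 2
      = ‖u - v‖ ^ 2 - (‖u‖ - ‖v‖) ^ 2 := by
    rw [norm_sub_sq_real, norm_sub_sq_real, norm_smul, norm_smul, real_inner_smul_left,
      real_inner_smul_right]
    simp only [norm_inv, norm_norm]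
    field_simp
    ring
  have hsq : (m * ‖‖u‖⁻¹ • u - ‖v‖⁻¹ • v‖) ^ 2 ≤ ‖u - v‖ ^ 2 := by
    have hmm : m * m ≤ ‖u‖ * ‖v‖ := mul_le_mul hu hv hm.le ha.le
    nlinarith [sq_nonneg (‖u‖ - ‖v‖), sq_nonneg ‖‖u‖⁻¹ • u - ‖v‖⁻¹ • v‖]
  exact (pow_le_pow_iff_left₀ (by positivity) (norm_nonneg _) two_ne_zero).1 hsq

/-- For the distance function `τ(x) = dist(x, E)` to a nonempty closed
convex set `E ⊂ ℝⁿ`, the gradients at points `x, y ∉ E` (where they exist)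
satisfy `|∇τ(x) - ∇τ(y)| ≤ (2/τ̄)|x - y|` with `τ̄ = min{τ(x), τ(y)}`. -/
theorem stmt_17 {n : ℕ}
    (E : Set (EuclideanSpace ℝ (Fin n))) (hne : E.Nonempty)
    (hcl : IsClosed E) (hcv : Convex ℝ E)
    (τ : EuclideanSpace ℝ (Fin n) → ℝ) (hτ : ∀ x, τ x = Metric.infDist x E)
    (x y : EuclideanSpace ℝ (Fin n)) (hx : x ∉ E) (hy : y ∉ E)
    (gx gy : EuclideanSpace ℝ (Fin n))
    (hgx : HasGradientAt τ gx x) (hgy : HasGradientAt τ gy y) :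
    ‖gx - gy‖ ≤ (2 / min (τ x) (τ y)) * ‖x - y‖ := by
  obtain rfl : τ = (infDist · E) := funext hτ
  beta_reduce
  obtain ⟨p, hp, hxp⟩ := hcl.exists_infDist_eq_dist hne x
  obtain ⟨q, hq, hyq⟩ := hcl.exists_infDist_eq_dist hne y
  rw [hgx.infDist_eq hp hx hxp, hgy.infDist_eq hq hy hyq, hxp, hyq, dist_eq_norm, dist_eq_norm]
  have hm : 0 < min ‖x - p‖ ‖y - q‖ := lt_min
    (norm_pos_iff.2 (sub_ne_zero.2 (ne_of_mem_of_not_mem hp hx).symm))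
    (norm_pos_iff.2 (sub_ne_zero.2 (ne_of_mem_of_not_mem hq hy).symm))
  rw [div_mul_eq_mul_div, le_div_iff₀ hm, mul_comm]
  calc min ‖x - p‖ ‖y - q‖ * ‖‖x - p‖⁻¹ • (x - p) - ‖y - q‖⁻¹ • (y - q)‖
      ≤ ‖(x - p) - (y - q)‖ :=
        mul_norm_inv_norm_smul_sub_le hm (min_le_left _ _) (min_le_right _ _)
    _ = ‖(x - y) - (p - q)‖ := by congr 1; abel
    _ ≤ ‖x - y‖ + ‖p - q‖ := norm_sub_le _ _
    _ ≤ 2 * ‖x - y‖ := by linarith [hcv.norm_sub_le_of_infDist_eq_dist hp hq hxp hyq]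
end
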